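/- (Contact transformation between the H1 and Q1 (δ=0) reduced systems.) Fix integers n, m. Let u, v, u1, u2 be smooth real functions on an open set D ⊆ ℝ² on which α ≠ β, α ≠ 0, β ≠ 0, v ≠ u1 and v ≠ u2, and suppose that on D the contact relations hold: ∂v/∂α = ((u1−v)/α)·(n + (u1−v)·∂u/∂α) and ∂v/∂β = ((u2−v)/β)·(m + (u2−v)·∂u/∂β). Then (u, u1, u2) satisfies the H1 reduced system Σ_H1(n,m) on D if and only if (v, u1, u2) satisfies the Q1 (δ=0) reduced system Σ_Q1(n,m) on D (with v1 := u1 and v2 := u2). -/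

import Mathlib

/-- Partial derivative with respect to the first variable. -/
noncomputable def pda (f : ℝ × ℝ → ℝ) (p : ℝ × ℝ) : ℝ :=
  deriv (fun x => f (x, p.2)) p.1

/-- Partial derivative with respect to the second variable. -/
noncomputable def pdb (f : ℝ × ℝ → ℝ) (p : ℝ × ℝ) : ℝ :=
  deriv (fun y => f (p.1, y)) p.2

/-- The H1 reduced system Σ_H1(n,m). -/
def SigmaH1 (n m : ℤ) (u u1 u2 : ℝ × ℝ → ℝ) (p : ℝ × ℝ) : Prop :=
  pdb u1 p = ((u1 p - u2 p) / (p.1 - p.2)) * ((m : ℝ) - (u1 p - u2 p) * pdb u p) ∧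
  pda u2 p = ((u1 p - u2 p) / (p.1 - p.2)) * ((n : ℝ) + (u1 p - u2 p) * pda u p) ∧
  pdb (pda u) p = (1 / (p.1 - p.2)) *
    (2 * (u1 p - u2 p) * pda u p * pdb u p + (n : ℝ) * pdb u p - (m : ℝ) * pda u p)

/-- The Q1 (δ=0) reduced system Σ_Q1(n,m). -/
def SigmaQ1 (n m : ℤ) (v v1 v2 : ℝ × ℝ → ℝ) (p : ℝ × ℝ) : Prop :=
  pdb v1 p = ((v1 p - v2 p) / (p.1 - p.2)) *
      (((m : ℝ) * (v p - v1 p) * (v p - v2 p) - p.2 * (v1 p - v2 p) * pdb v p)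
        / (v p - v2 p) ^ 2) ∧
  pda v2 p = ((v1 p - v2 p) / (p.1 - p.2)) *
      (((n : ℝ) * (v p - v1 p) * (v p - v2 p) + p.1 * (v1 p - v2 p) * pda v p)
        / (v p - v1 p) ^ 2) ∧
  pdb (pda v) p = (1 / (p.1 - p.2)) *
      (2 * (p.1 / (v p - v1 p) - p.2 / (v p - v2 p)) * pda v p * pdb v p
        + (n : ℝ) * pdb v p - (m : ℝ) * pda v p)

/-! ### Auxiliary differentiation lemmas -/

lemma pda_eq_fderiv {f : ℝ × ℝ → ℝ} {p : ℝ × ℝ} (hf : DifferentiableAt ℝ f p) :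
    pda f p = fderiv ℝ f p (1, 0) := by
  have h1 : HasDerivAt (fun x : ℝ => (x, p.2)) ((1:ℝ), (0:ℝ)) p.1 :=
    (hasDerivAt_id p.1).prodMk (hasDerivAt_const p.1 p.2)
  have h2 := hf.hasFDerivAt.comp_hasDerivAt p.1 h1
  exact h2.deriv

lemma hasDerivAt_beta {f : ℝ × ℝ → ℝ} {p : ℝ × ℝ} (hf : DifferentiableAt ℝ f p) :
    HasDerivAt (fun y => f (p.1, y)) (pdb f p) p.2 := by
  have h1 : HasDerivAt (fun y : ℝ => (p.1, y)) ((0:ℝ), (1:ℝ)) p.2 :=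
    (hasDerivAt_const p.2 p.1).prodMk (hasDerivAt_id p.2)
  have h2 := hf.hasFDerivAt.comp_hasDerivAt p.2 h1
  have h3 : pdb f p = fderiv ℝ f p (0, 1) := h2.deriv
  rw [h3]; exact h2

lemma hasDerivAt_pda_beta {f : ℝ × ℝ → ℝ} {D : Set (ℝ × ℝ)} (hD : IsOpen D)
    (hf : ContDiffOn ℝ (⊤ : ℕ∞) f D) {p : ℝ × ℝ} (hp : p ∈ D) :
    HasDerivAt (fun y => pda f (p.1, y)) (pdb (pda f) p) p.2 := by
  have hG : ContDiffOn ℝ (⊤ : ℕ∞) (fun q => fderiv ℝ f q ((1:ℝ), (0:ℝ))) D :=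
    (hf.fderiv_of_isOpen hD (by simp)).clm_apply contDiffOn_const
  have hdiffAt : ∀ q ∈ D, DifferentiableAt ℝ f q := fun q hq =>
    ((hf.differentiableOn (by simp)) q hq).differentiableAt (hD.mem_nhds hq)
  have hGd : DifferentiableAt ℝ (fun q => fderiv ℝ f q ((1:ℝ), (0:ℝ))) p :=
    ((hG.differentiableOn (by simp)) p hp).differentiableAt (hD.mem_nhds hp)
  have hline : DifferentiableAt ℝ (fun y : ℝ => (p.1, y)) p.2 :=
    DifferentiableAt.prodMk (differentiableAt_const p.1) differentiableAt_id
  have hGcomp : DifferentiableAt ℝ (fun y => fderiv ℝ f (p.1, y) ((1:ℝ), (0:ℝ))) p.2 :=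
    DifferentiableAt.comp (g := fun q => fderiv ℝ f q ((1:ℝ), (0:ℝ))) p.2 hGd hline
  have hmem : {y : ℝ | (p.1, y) ∈ D} ∈ nhds p.2 :=
    (hD.preimage (Continuous.prodMk_right p.1)).mem_nhds hp
  have hev : (fun y => pda f (p.1, y)) =ᶠ[nhds p.2]
      (fun y => fderiv ℝ f (p.1, y) ((1:ℝ), (0:ℝ))) := by
    filter_upwards [hmem] with y hy
    exact pda_eq_fderiv (hdiffAt _ hy)
  have hd : DifferentiableAt ℝ (fun y => pda f (p.1, y)) p.2 :=
    hGcomp.congr_of_eventuallyEq hev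
  exact hd.hasDerivAt

/-- Differentiating the first contact relation with respect to β. -/
lemma lemA (n : ℤ) (u v u1 : ℝ × ℝ → ℝ) (D : Set (ℝ × ℝ)) (hD : IsOpen D)
    (hu : ContDiffOn ℝ (⊤ : ℕ∞) u D) (hv : ContDiffOn ℝ (⊤ : ℕ∞) v D) (hu1 : ContDiffOn ℝ (⊤ : ℕ∞) u1 D)
    (hcontact1 : ∀ p ∈ D,
      pda v p = ((u1 p - v p) / p.1) * ((n : ℝ) + (u1 p - v p) * pda u p))
    (p : ℝ × ℝ) (hp : p ∈ D) (ha : p.1 ≠ 0) :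
    p.1 * pdb (pda v) p =
      (pdb u1 p - pdb v p) * ((n : ℝ) + 2 * (u1 p - v p) * pda u p)
      + (u1 p - v p) ^ 2 * pdb (pda u) p := by
  have hdiffAt : ∀ (f : ℝ × ℝ → ℝ), ContDiffOn ℝ (⊤ : ℕ∞) f D → DifferentiableAt ℝ f p :=
    fun f hf => ((hf.differentiableOn (by simp)) p hp).differentiableAt (hD.mem_nhds hp)
  have h1 : HasDerivAt (fun y => u1 (p.1, y)) (pdb u1 p) p.2 :=
    hasDerivAt_beta (hdiffAt u1 hu1)
  have h2 : HasDerivAt (fun y => v (p.1, y)) (pdb v p) p.2 :=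
    hasDerivAt_beta (hdiffAt v hv)
  have h3 : HasDerivAt (fun y => pda u (p.1, y)) (pdb (pda u) p) p.2 :=
    hasDerivAt_pda_beta hD hu hp
  have hL : HasDerivAt (fun y => pda v (p.1, y)) (pdb (pda v) p) p.2 :=
    hasDerivAt_pda_beta hD hv hp
  have hw : HasDerivAt (fun y => u1 (p.1, y) - v (p.1, y)) (pdb u1 p - pdb v p) p.2 :=
    h1.sub h2
  have hq : HasDerivAt (fun y => (u1 (p.1, y) - v (p.1, y)) * pda u (p.1, y))
      ((pdb u1 p - pdb v p) * pda u p + (u1 p - v p) * pdb (pda u) p) p.2 := hw.mul h3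
  have hc : HasDerivAt (fun y => (n : ℝ) + (u1 (p.1, y) - v (p.1, y)) * pda u (p.1, y))
      ((pdb u1 p - pdb v p) * pda u p + (u1 p - v p) * pdb (pda u) p) p.2 :=
    hq.const_add (n : ℝ)
  have hdiv : HasDerivAt (fun y => (u1 (p.1, y) - v (p.1, y)) / p.1)
      ((pdb u1 p - pdb v p) / p.1) p.2 := hw.div_const p.1
  have hR : HasDerivAt
      (fun y => ((u1 (p.1, y) - v (p.1, y)) / p.1) *
        ((n : ℝ) + (u1 (p.1, y) - v (p.1, y)) * pda u (p.1, y)))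
      ((pdb u1 p - pdb v p) / p.1 * ((n : ℝ) + (u1 p - v p) * pda u p)
        + (u1 p - v p) / p.1 *
          ((pdb u1 p - pdb v p) * pda u p + (u1 p - v p) * pdb (pda u) p)) p.2 :=
    hdiv.mul hc
  have hmem : {y : ℝ | (p.1, y) ∈ D} ∈ nhds p.2 :=
    (hD.preimage (Continuous.prodMk_right p.1)).mem_nhds hp
  have hev : (fun y => pda v (p.1, y)) =ᶠ[nhds p.2]
      (fun y => ((u1 (p.1, y) - v (p.1, y)) / p.1) *
        ((n : ℝ) + (u1 (p.1, y) - v (p.1, y)) * pda u (p.1, y))) := by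
    filter_upwards [hmem] with y hy
    exact hcontact1 _ hy
  have hr : pdb (pda v) p =
      (pdb u1 p - pdb v p) / p.1 * ((n : ℝ) + (u1 p - v p) * pda u p)
        + (u1 p - v p) / p.1 *
          ((pdb u1 p - pdb v p) * pda u p + (u1 p - v p) * pdb (pda u) p) :=
    hL.unique (hR.congr_of_eventuallyEq hev)
  rw [hr]
  field_simp
  ring

/-- The purely algebraic pointwise equivalence. -/
lemma ptwise (a b N M U1 U2 V A B u1b u2a uab va vb vab : ℝ)
    (ha : a ≠ 0) (hb : b ≠ 0) (hab : a - b ≠ 0)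
    (h1 : U1 - V ≠ 0) (h2 : U2 - V ≠ 0) (h1' : V - U1 ≠ 0) (h2' : V - U2 ≠ 0)
    (hva : va = ((U1 - V) / a) * (N + (U1 - V) * A))
    (hvb : vb = ((U2 - V) / b) * (M + (U2 - V) * B))
    (hA : a * vab = (u1b - vb) * (N + 2 * (U1 - V) * A) + (U1 - V) ^ 2 * uab) :
    (u1b = ((U1 - U2) / (a - b)) * (M - (U1 - U2) * B) ∧
     u2a = ((U1 - U2) / (a - b)) * (N + (U1 - U2) * A) ∧
     uab = (1 / (a - b)) * (2 * (U1 - U2) * A * B + N * B - M * A)) ↔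
    (u1b = ((U1 - U2) / (a - b)) *
        ((M * (V - U1) * (V - U2) - b * (U1 - U2) * vb) / (V - U2) ^ 2) ∧
     u2a = ((U1 - U2) / (a - b)) *
        ((N * (V - U1) * (V - U2) + a * (U1 - U2) * va) / (V - U1) ^ 2) ∧
     vab = (1 / (a - b)) *
        (2 * (a / (V - U1) - b / (V - U2)) * va * vb + N * vb - M * va)) := by
  subst hva hvb
  have hid : ((U1 - U2) / (a - b)) *
        ((M * (V - U1) * (V - U2) - b * (U1 - U2) * (((U2 - V) / b) * (M + (U2 - V) * B)))
          / (V - U2) ^ 2) = ((U1 - U2) / (a - b)) * (M - (U1 - U2) * B) := by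
    field_simp
    ring
  have hid2 : ((U1 - U2) / (a - b)) *
        ((N * (V - U1) * (V - U2) + a * (U1 - U2) * (((U1 - V) / a) * (N + (U1 - V) * A)))
          / (V - U1) ^ 2) = ((U1 - U2) / (a - b)) * (N + (U1 - U2) * A) := by
    field_simp
    ring
  constructor
  · rintro ⟨e1, e2, e3⟩
    refine ⟨by rw [e1, hid], by rw [e2, hid2], ?_⟩
    refine mul_left_cancel₀ ha (hA.trans ?_)
    rw [e1, e3]
    field_simp
    ring
  · rintro ⟨f1, f2, f3⟩
    have e1 : u1b = ((U1 - U2) / (a - b)) * (M - (U1 - U2) * B) := f1.trans hid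
    have e2 : u2a = ((U1 - U2) / (a - b)) * (N + (U1 - U2) * A) := f2.trans hid2
    refine ⟨e1, e2, ?_⟩
    have h4 : (u1b - ((U2 - V) / b) * (M + (U2 - V) * B)) * (N + 2 * (U1 - V) * A)
        + (U1 - V) ^ 2 * ((1 / (a - b)) * (2 * (U1 - U2) * A * B + N * B - M * A))
        = a * vab := by
      rw [e1, f3]
      field_simp
      ring
    have h5 : (u1b - ((U2 - V) / b) * (M + (U2 - V) * B)) * (N + 2 * (U1 - V) * A)
          + (U1 - V) ^ 2 * uab
        = (u1b - ((U2 - V) / b) * (M + (U2 - V) * B)) * (N + 2 * (U1 - V) * A)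
          + (U1 - V) ^ 2 * ((1 / (a - b)) * (2 * (U1 - U2) * A * B + N * B - M * A)) :=
      hA.symm.trans h4.symm
    exact mul_left_cancel₀ (pow_ne_zero 2 h1) (add_left_cancel h5)

/-- Contact transformation between the H1 and Q1 (δ=0) reduced systems. -/
theorem contact_transformation_H1_Q1
    (n m : ℤ) (u v u1 u2 : ℝ × ℝ → ℝ)
    (D : Set (ℝ × ℝ)) (hD : IsOpen D)
    (hαβ : ∀ p ∈ D, p.1 ≠ p.2) (hα0 : ∀ p ∈ D, p.1 ≠ 0) (hβ0 : ∀ p ∈ D, p.2 ≠ 0)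
    (hvu1 : ∀ p ∈ D, v p ≠ u1 p) (hvu2 : ∀ p ∈ D, v p ≠ u2 p)
    (hu : ContDiffOn ℝ (⊤ : ℕ∞) u D) (hv : ContDiffOn ℝ (⊤ : ℕ∞) v D)
    (hu1 : ContDiffOn ℝ (⊤ : ℕ∞) u1 D) (hu2 : ContDiffOn ℝ (⊤ : ℕ∞) u2 D)
    (hcontact1 : ∀ p ∈ D,
      pda v p = ((u1 p - v p) / p.1) * ((n : ℝ) + (u1 p - v p) * pda u p))
    (hcontact2 : ∀ p ∈ D,
      pdb v p = ((u2 p - v p) / p.2) * ((m : ℝ) + (u2 p - v p) * pdb u p)) :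
    (∀ p ∈ D, SigmaH1 n m u u1 u2 p) ↔ (∀ p ∈ D, SigmaQ1 n m v u1 u2 p) := by
  have main : ∀ p ∈ D, (SigmaH1 n m u u1 u2 p ↔ SigmaQ1 n m v u1 u2 p) := by
    intro p hp
    have ha := hα0 p hp
    have hb := hβ0 p hp
    have hab : p.1 - p.2 ≠ 0 := sub_ne_zero.mpr (hαβ p hp)
    have h1 : u1 p - v p ≠ 0 := sub_ne_zero.mpr (hvu1 p hp).symm
    have h2 : u2 p - v p ≠ 0 := sub_ne_zero.mpr (hvu2 p hp).symm
    have h1' : v p - u1 p ≠ 0 := sub_ne_zero.mpr (hvu1 p hp)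
    have h2' : v p - u2 p ≠ 0 := sub_ne_zero.mpr (hvu2 p hp)
    have hA := lemA n u v u1 D hD hu hv hu1 hcontact1 p hp ha
    exact ptwise p.1 p.2 (n : ℝ) (m : ℝ) (u1 p) (u2 p) (v p)
      (pda u p) (pdb u p) (pdb u1 p) (pda u2 p) (pdb (pda u) p)
      (pda v p) (pdb v p) (pdb (pda v) p)
      ha hb hab h1 h2 h1' h2' (hcontact1 p hp) (hcontact2 p hp) hA
  exact ⟨fun h p hp => (main p hp).mp (h p hp), fun h p hp => (main p hp).mpr (h p hp)⟩
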